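/- Let θ > 0 be arbitrary and let C, D, γ > 0. Then there is no continuous nonnegative function h : [0, ∞) → ℝ satisfying h(t) ≥ C + D ∫₀ᵗ h(s)^{1+γ} (t−s)^{−θ} ds for all t > 0. (Every nonnegative solution of this renewal inequality blows up in finite time, for any positive exponent θ, not only for (1+γ)θ < 1.) -/

import Mathlib

/-!
Since `h ≥ C`, the integrand dominates `C ^ (1 + γ) (t - s) ^ (-θ)`. For `θ ≥ 1` this kernel is
not integrable at `s = t`, so the right-hand side of the inequality is infinite.

For `θ < 1`, if `h ≥ M` on `(T, ∞)`, integrating only over a window `(t - δ, t)` gives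
`h t ≥ D M ^ (1 + γ) δ ^ (1 - θ)`, which equals `2 M` for `δ ≍ M ^ (-γ / (1 - θ))`. Along
`M = 2 ^ k C` these window lengths form a convergent geometric series, so at a finite time `t`
we get `h t ≥ 2 ^ k C` for every `k`.
-/

open MeasureTheory Set
open scoped ENNReal

lemma lintegral_Ioo_sub_rpow_neg_eq_top {θ t : ℝ} (hθ : 1 ≤ θ) (ht : 0 < t) :
    ∫⁻ s in Ioo 0 t, ENNReal.ofReal ((t - s) ^ (-θ)) = ∞ := by
  by_contra hfin
  have hint : IntegrableOn (fun s ↦ (t - s) ^ (-θ)) (Ioo 0 t) :=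
    (lintegral_ofReal_ne_top_iff_integrable
      ((measurable_const.sub measurable_id).pow_const _).aestronglyMeasurable
      (ae_restrict_of_forall_mem measurableSet_Ioo fun s hs ↦
        Real.rpow_nonneg (sub_pos.2 hs.2).le _)).1 hfin
  have hreflected : IntegrableOn (fun u ↦ u ^ (-θ)) (Ioo 0 t) := by
    rw [← intervalIntegrable_iff_integrableOn_Ioo_of_le ht.le] at hint ⊢
    simpa using (hint.comp_sub_left t).symm
  have := (intervalIntegral.integrableOn_Ioo_rpow_iff ht).1 hreflected
  linarith

lemma ofReal_mul_rpow_le_setLIntegral_Ioo {g : ℝ → ℝ} {θ M δ t : ℝ} (hθ : 0 ≤ θ) (hM : 0 ≤ M)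
    (hδ : 0 < δ) (hg : ∀ s ∈ Ioo (t - δ) t, M ≤ g s) :
    ENNReal.ofReal (M * δ ^ (1 - θ))
      ≤ ∫⁻ s in Ioo (t - δ) t, ENNReal.ofReal (g s * (t - s) ^ (-θ)) := by
  have hkernel : ∀ s ∈ Ioo (t - δ) t, M * δ ^ (-θ) ≤ g s * (t - s) ^ (-θ) := fun s hs ↦
    mul_le_mul (hg s hs) (Real.rpow_le_rpow_of_nonpos (sub_pos.2 hs.2) (by linarith [hs.1])
      (neg_nonpos.2 hθ)) (by positivity) (hM.trans (hg s hs))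
  calc ENNReal.ofReal (M * δ ^ (1 - θ))
      = ∫⁻ _ in Ioo (t - δ) t, ENNReal.ofReal (M * δ ^ (-θ)) := by
        rw [setLIntegral_const, Real.volume_Ioo, sub_sub_cancel,
          ← ENNReal.ofReal_mul (by positivity), mul_assoc, sub_eq_neg_add, Real.rpow_add hδ,
          Real.rpow_one]
    _ ≤ _ := setLIntegral_mono' measurableSet_Ioo fun s hs ↦ ENNReal.ofReal_le_ofReal (hkernel s hs)

lemma exists_forall_two_pow_mul_le_of_doubling {h : ℝ → ℝ} {C a β : ℝ} (hC : 0 < C) (ha : 0 ≤ a)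
    (hβ : 0 < β) (hbase : ∀ t > 0, C ≤ h t)
    (hstep : ∀ M T, 0 < M → 0 ≤ T → (∀ t > T, M ≤ h t) → ∀ t > T + a * M ^ (-β), 2 * M ≤ h t) :
    ∃ t, ∀ k : ℕ, 2 ^ k * C ≤ h t := by
  set ρ : ℝ := 2 ^ (-β)
  have hρ0 : 0 ≤ ρ := by positivity
  have hρ1 : ρ < 1 := Real.rpow_lt_one_of_one_lt_of_neg one_lt_two (neg_neg_of_pos hβ)
  set T : ℕ → ℝ := fun k ↦ a * C ^ (-β) * ∑ j ∈ Finset.range k, ρ ^ j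
  have hT_nonneg : ∀ k, 0 ≤ T k := fun k ↦ by positivity
  have hT_le : ∀ k, T k ≤ a * C ^ (-β) / (1 - ρ) := fun k ↦ by
    have := geom_sum_Ico_le_of_lt_one (m := 0) (n := k) hρ0 hρ1
    rw [pow_zero, ← Finset.range_eq_Ico] at this
    calc T k ≤ a * C ^ (-β) * (1 / (1 - ρ)) := mul_le_mul_of_nonneg_left this (by positivity)
      _ = _ := by ring
  have hT_succ : ∀ k : ℕ, T (k + 1) = T k + a * (2 ^ k * C) ^ (-β) := fun k ↦ by
    simp only [T, Finset.sum_range_succ, ρ]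
    rw [Real.mul_rpow (by positivity) hC.le, ← Real.rpow_pow_comm zero_le_two]
    ring
  have hlower : ∀ k : ℕ, ∀ t > T k, 2 ^ k * C ≤ h t := by
    intro k
    induction k with
    | zero => simpa [T] using hbase
    | succ k ih =>
      intro t ht
      rw [pow_succ', mul_assoc]
      exact hstep _ _ (by positivity) (hT_nonneg k) ih t (hT_succ k ▸ ht)
  exact ⟨a * C ^ (-β) / (1 - ρ) + 1, fun k ↦ hlower k _ (by linarith [hT_le k])⟩

def IsRenewalSupersolution (θ γ C D : ℝ) (h : ℝ → ℝ) : Prop :=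
  (∀ t ∈ Ici (0 : ℝ), 0 ≤ h t) ∧
    ∀ t : ℝ, 0 < t →
      ENNReal.ofReal C
          + ENNReal.ofReal D * ∫⁻ s in Ioo 0 t, ENNReal.ofReal (h s ^ (1 + γ) * (t - s) ^ (-θ))
        ≤ ENNReal.ofReal (h t)

namespace IsRenewalSupersolution

variable {θ γ C D M δ t : ℝ} {h : ℝ → ℝ}

lemma le_apply (H : IsRenewalSupersolution θ γ C D h) (ht : 0 < t) : C ≤ h t :=
  (ENNReal.ofReal_le_ofReal_iff (H.1 t ht.le)).1 (le_self_add.trans (H.2 t ht))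

lemma ofReal_mul_lintegral_le (H : IsRenewalSupersolution θ γ C D h) (ht : 0 < t) :
    ENNReal.ofReal D * ∫⁻ s in Ioo 0 t, ENNReal.ofReal (h s ^ (1 + γ) * (t - s) ^ (-θ))
      ≤ ENNReal.ofReal (h t) :=
  le_add_self.trans (H.2 t ht)

lemma mul_rpow_mul_rpow_le (H : IsRenewalSupersolution θ γ C D h) (hθ : 0 ≤ θ) (hγ : 0 ≤ 1 + γ)
    (hD : 0 ≤ D) (hM : 0 ≤ M) (hδ : 0 < δ) (hδt : δ ≤ t) (hMh : ∀ s ∈ Ioo (t - δ) t, M ≤ h s) :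
    D * M ^ (1 + γ) * δ ^ (1 - θ) ≤ h t := by
  have ht : 0 < t := hδ.trans_le hδt
  have hwindow := ofReal_mul_rpow_le_setLIntegral_Ioo (g := fun s ↦ h s ^ (1 + γ)) hθ
    (Real.rpow_nonneg hM _) hδ fun s hs ↦ Real.rpow_le_rpow hM (hMh s hs) hγ
  rw [← ENNReal.ofReal_le_ofReal_iff (H.1 t ht.le), mul_assoc, ENNReal.ofReal_mul hD]
  calc ENNReal.ofReal D * ENNReal.ofReal (M ^ (1 + γ) * δ ^ (1 - θ))
      ≤ ENNReal.ofReal D * ∫⁻ s in Ioo 0 t, ENNReal.ofReal (h s ^ (1 + γ) * (t - s) ^ (-θ)) := by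
        gcongr
        exact hwindow.trans (lintegral_mono_set (Ioo_subset_Ioo_left (sub_nonneg.2 hδt)))
    _ ≤ _ := H.ofReal_mul_lintegral_le ht

/-- The window length `δ = (2 / (D M ^ γ)) ^ (1 - θ)⁻¹` makes `D M ^ (1 + γ) δ ^ (1 - θ) = 2 M`. -/
lemma two_mul_le_of_forall_lt {T : ℝ} (H : IsRenewalSupersolution θ γ C D h) (hθ₀ : 0 ≤ θ)
    (hθ₁ : θ < 1) (hγ : 0 ≤ γ) (hD : 0 < D) (hM : 0 < M) (hT : 0 ≤ T) (hMh : ∀ t > T, M ≤ h t) :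
    ∀ t > T + (2 / D) ^ (1 - θ)⁻¹ * M ^ (-(γ / (1 - θ))), 2 * M ≤ h t := by
  intro t ht
  set δ := (2 / D) ^ (1 - θ)⁻¹ * M ^ (-(γ / (1 - θ)))
  have hθ' : 1 - θ ≠ 0 := (sub_pos.2 hθ₁).ne'
  have hδ : 0 < δ := by positivity
  have hδpow : δ ^ (1 - θ) = 2 / D * M ^ (-γ) := by
    rw [Real.mul_rpow (by positivity) (by positivity), Real.rpow_inv_rpow (by positivity) hθ',
      ← Real.rpow_mul hM.le, neg_mul, div_mul_cancel₀ _ hθ']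
  calc 2 * M = D * M ^ (1 + γ) * δ ^ (1 - θ) := by
        rw [hδpow, Real.rpow_add hM, Real.rpow_one, Real.rpow_neg hM.le]
        field_simp
    _ ≤ h t := H.mul_rpow_mul_rpow_le hθ₀ (by linarith) hD.le hM.le hδ (by linarith)
        fun s hs ↦ hMh s (by linarith [hs.1])

end IsRenewalSupersolution

theorem not_isRenewalSupersolution_of_one_le {θ γ C D : ℝ} {h : ℝ → ℝ} (hθ : 1 ≤ θ)
    (hγ : 0 ≤ 1 + γ) (hC : 0 < C) (hD : 0 < D) : ¬ IsRenewalSupersolution θ γ C D h := by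
  intro H
  have htop : ∫⁻ s in Ioo 0 1, ENNReal.ofReal (h s ^ (1 + γ) * (1 - s) ^ (-θ)) = ∞ := by
    refine eq_top_iff.2 (le_trans ?_ (setLIntegral_mono' measurableSet_Ioo fun s hs ↦
      ENNReal.ofReal_le_ofReal (mul_le_mul_of_nonneg_right
        (Real.rpow_le_rpow hC.le (H.le_apply hs.1) hγ) (Real.rpow_nonneg (sub_pos.2 hs.2).le _))))
    simp_rw [ENNReal.ofReal_mul (Real.rpow_nonneg hC.le _)]
    rw [lintegral_const_mul' _ _ ENNReal.ofReal_ne_top,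
      lintegral_Ioo_sub_rpow_neg_eq_top hθ one_pos, ENNReal.mul_top (by positivity)]
  have := H.ofReal_mul_lintegral_le one_pos
  rw [htop, ENNReal.mul_top (by positivity)] at this
  exact ENNReal.ofReal_ne_top (top_le_iff.1 this)

theorem not_isRenewalSupersolution_of_lt_one {θ γ C D : ℝ} {h : ℝ → ℝ} (hθ₀ : 0 ≤ θ) (hθ₁ : θ < 1)
    (hγ : 0 < γ) (hC : 0 < C) (hD : 0 < D) : ¬ IsRenewalSupersolution θ γ C D h := by
  intro H
  obtain ⟨t, ht⟩ := exists_forall_two_pow_mul_le_of_doubling hC (by positivity)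
    (div_pos hγ (sub_pos.2 hθ₁)) (fun t ↦ H.le_apply)
    fun M T hM hT ↦ H.two_mul_le_of_forall_lt hθ₀ hθ₁ hγ.le hD hM hT
  obtain ⟨k, hk⟩ := pow_unbounded_of_one_lt (h t / C) one_lt_two
  linarith [ht k, (div_lt_iff₀ hC).1 hk]

/-- Proposition 2.9 of the paper.
Let `θ > 0` be arbitrary and let `C, D, γ > 0`.  Then there is no continuous
nonnegative function `h : [0, ∞) → ℝ` satisfying the renewal inequality
`h t ≥ C + D ∫₀ᵗ h(s)^(1+γ) (t-s)^(-θ) ds` for all `t > 0`, where the integral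
is the Lebesgue integral of the nonnegative integrand over `(0, t)` (with value
`+∞` allowed). -/
theorem no_global_solution_renewal_inequality_general_theta
    (θ γ C D : ℝ) (hθ : 0 < θ) (hγ : 0 < γ) (hC : 0 < C) (hD : 0 < D) :
    ¬ ∃ h : ℝ → ℝ,
      ContinuousOn h (Set.Ici 0) ∧
      (∀ t ∈ Set.Ici (0 : ℝ), 0 ≤ h t) ∧
      (∀ t : ℝ, 0 < t →
        ENNReal.ofReal C
          + ENNReal.ofReal D *
            ∫⁻ s in Set.Ioo 0 t, ENNReal.ofReal (h s ^ (1 + γ) * (t - s) ^ (-θ))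
          ≤ ENNReal.ofReal (h t)) := by
  rintro ⟨h, -, H⟩
  rcases lt_or_ge θ 1 with hθ₁ | hθ₁
  · exact not_isRenewalSupersolution_of_lt_one hθ.le hθ₁ hγ hC hD H
  · exact not_isRenewalSupersolution_of_one_le hθ₁ (by linarith) hC hD H
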